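/- Let k and l be natural numbers with l ≥ 1, and let F be the (k+l)×(k+l) matrix with entry F i j = 1 if both i ≥ k and j ≥ k, and F i j = 0 otherwise. If m is a natural number and A is a (k+l)×m matrix with nonnegative integer entries such that A * Aᵀ = F, then A has exactly one nonzero column, and that column is the indicator vector of the set of indices i with i ≥ k (i.e. it has entry 1 in positions i ≥ k and 0 in positions i < k). -/

import Mathlib

/-!
Row `i` of `A` has squared length `F i i`, and rows `i, i' ≥ k` have inner product `1`.
So the rows `i < k` vanish, and any two rows `i, i' ≥ k` satisfy `|Aᵢ - Aᵢ'|² = 1 - 2 + 1 = 0`,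
hence all coincide. Their common value is a nonnegative integer vector of squared length `1`,
i.e. a standard basis vector `e_{j₀}`, and then column `j₀` is the indicator of `{i ≥ k}` while
every other column is zero.
-/

open Matrix

theorem eq_of_dotProduct_self_eq_dotProduct {n R : Type*} [Fintype n] [CommRing R] [LinearOrder R]
    [IsStrictOrderedRing R] {v w : n → R} (hv : v ⬝ᵥ v = v ⬝ᵥ w) (hw : w ⬝ᵥ w = v ⬝ᵥ w) :
    v = w := by
  have hsq : (v - w) ⬝ᵥ (v - w) = 0 := by
    simp only [sub_dotProduct, dotProduct_sub, dotProduct_comm w v, hv, hw]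
    ring
  exact sub_eq_zero.mp (dotProduct_self_eq_zero.mp hsq)

theorem exists_eq_single_of_dotProduct_self_eq_one {n : Type*} [Fintype n] [DecidableEq n]
    {v : n → ℤ} (hv : ∀ j, 0 ≤ v j) (h : v ⬝ᵥ v = 1) : ∃ j₀, v = Pi.single j₀ 1 := by
  obtain ⟨j₀, hj₀⟩ : ∃ j₀, v j₀ ≠ 0 := by
    by_contra! hzero
    simp [funext hzero] at h
  have hsplit : v j₀ * v j₀ + ∑ j ∈ Finset.univ.erase j₀, v j * v j = 1 := by
    rw [Finset.add_sum_erase _ (fun j => v j * v j) (Finset.mem_univ j₀)]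
    exact h
  have hrest : 0 ≤ ∑ j ∈ Finset.univ.erase j₀, v j * v j :=
    Finset.sum_nonneg fun j _ => mul_self_nonneg (v j)
  have hone : v j₀ = 1 := by
    have := hv j₀
    have : 1 ≤ v j₀ := by omega
    nlinarith
  have hrest_zero : ∑ j ∈ Finset.univ.erase j₀, v j * v j = 0 := by
    rw [hone] at hsplit
    omega
  refine ⟨j₀, funext fun j => ?_⟩
  rcases eq_or_ne j j₀ with rfl | hj
  · simp [hone]
  · rw [Pi.single_eq_of_ne hj]
    exact mul_self_eq_zero.mp <| (Finset.sum_eq_zero_iff_of_nonneg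
      (fun j _ => mul_self_nonneg (v j))).mp hrest_zero j (by simp [hj])

/-- Let `F` be the `(k+l) × (k+l)` matrix with `F i j = 1` when both `i ≥ k` and `j ≥ k`, and
`F i j = 0` otherwise (the reduced fusion matrix of a saturated simple algebra object, where the
first `k` indices are the nontrivial invertible simples and the last `l` the non-invertible
ones).  If `l ≥ 1` and `A` is a `(k+l) × m` matrix with nonnegative integer entries with
`A * Aᵀ = F`, then `A` has exactly one nonzero column, namely the indicator vector of
`{i : i ≥ k}`. -/
theorem stmt_3 (k l : ℕ) (hl : 1 ≤ l) (m : ℕ)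
    (A : Matrix (Fin (k + l)) (Fin m) ℤ) (hA : ∀ i j, 0 ≤ A i j)
    (h : A * Aᵀ = Matrix.of fun i j : Fin (k + l) =>
      if k ≤ (i : ℕ) ∧ k ≤ (j : ℕ) then (1 : ℤ) else 0) :
    ∃ j₀ : Fin m,
      (∀ i, A i j₀ = if k ≤ (i : ℕ) then (1 : ℤ) else 0) ∧
      (∀ j, j ≠ j₀ → ∀ i, A i j = 0) := by
  have hgram (i i' : Fin (k + l)) :
      A i ⬝ᵥ A i' = if k ≤ (i : ℕ) ∧ k ≤ (i' : ℕ) then 1 else 0 := by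
    simpa [mul_apply'] using congrFun₂ h i i'
  let i₀ : Fin (k + l) := ⟨k, by omega⟩
  have hlow (i : Fin (k + l)) (hi : ¬k ≤ (i : ℕ)) : A i = 0 :=
    dotProduct_self_eq_zero.mp (by simpa [hi] using hgram i i)
  have hhigh (i : Fin (k + l)) (hi : k ≤ (i : ℕ)) : A i = A i₀ :=
    eq_of_dotProduct_self_eq_dotProduct (by simp [hgram, hi, i₀]) (by simp [hgram, hi, i₀])
  obtain ⟨j₀, hj₀⟩ :=
    exists_eq_single_of_dotProduct_self_eq_one (hA i₀) (by simpa [i₀] using hgram i₀ i₀)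
  have hrow (i : Fin (k + l)) : A i = if k ≤ (i : ℕ) then Pi.single j₀ 1 else 0 := by
    split_ifs with hi
    · rw [hhigh i hi, hj₀]
    · exact hlow i hi
  refine ⟨j₀, fun i => ?_, fun j hj i => ?_⟩
  · rw [hrow i]
    split_ifs <;> simp
  · rw [hrow i]
    split_ifs <;> simp [hj]
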